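/- Let (Ω, 𝓕, P) be a probability space with Ω a standard Borel space, and let Z : Ω → Fin K, X : Ω → Bool, W : Ω → Bool, U : Ω → Fin m be measurable (K, m ≥ 1). If U and Z are independent (IndepFun), and W is conditionally independent of the pair ⟨X, Z⟩ given the σ-algebra generated by U (CondIndepFun), then Z and W are independent; moreover Z is independent of the pair ⟨W, U⟩. -/

import Mathlib

open MeasureTheory ProbabilityTheory

/-- Lemma 2 of the paper: under the unobserved-confounder IV model (iv)
(`U ⫫ Z` and `W ⫫ (X, Z) | U`), the instrument `Z` is independent of `W`,
and moreover `Z` is independent of the pair `(W, U)`. -/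
theorem iv_model4_Z_indep
    {Ω : Type*} [MeasurableSpace Ω] [StandardBorelSpace Ω]
    (P : Measure Ω) [IsProbabilityMeasure P]
    {K m : ℕ} (hK : 1 ≤ K) (hm : 1 ≤ m)
    (Z : Ω → Fin K) (X W : Ω → Bool) (U : Ω → Fin m)
    (hZ : Measurable Z) (hX : Measurable X) (hW : Measurable W) (hU : Measurable U)
    (hUZ : IndepFun U Z P)
    (hci : CondIndepFun (MeasurableSpace.comap U inferInstance) hU.comap_le
      W (fun ω => (X ω, Z ω)) P) :
    IndepFun Z W P ∧ IndepFun Z (fun ω => (W ω, U ω)) P := by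
  classical
  have hm' : MeasurableSpace.comap U inferInstance ≤ _ := hU.comap_le
  -- `W ⫫ Z | U`
  have hWZ : CondIndepFun (MeasurableSpace.comap U inferInstance) hU.comap_le W Z P := by
    have h := hci.comp (measurable_id (α := Bool)) (measurable_snd (α := Bool) (β := Fin K))
    exact h
  -- key rectangle computation
  have key : ∀ (s : Set (Fin K)) (a : Set Bool) (b : Set (Fin m)),
      P (Z ⁻¹' s ∩ (W ⁻¹' a ∩ U ⁻¹' b)) = P (Z ⁻¹' s) * P (W ⁻¹' a ∩ U ⁻¹' b) := by
    intro s a b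
    have hsm : MeasurableSet s := MeasurableSet.of_discrete
    have ham : MeasurableSet a := MeasurableSet.of_discrete
    have hbm : MeasurableSet b := MeasurableSet.of_discrete
    have hZs : MeasurableSet (Z ⁻¹' s) := hZ hsm
    have hWa : MeasurableSet (W ⁻¹' a) := hW ham
    have hUb : MeasurableSet (U ⁻¹' b) := hU hbm
    have hUb' : MeasurableSet[MeasurableSpace.comap U inferInstance] (U ⁻¹' b) := ⟨b, hbm, rfl⟩
    have hA : MeasurableSet (W ⁻¹' a ∩ Z ⁻¹' s) := hWa.inter hZs
    set c : ℝ := (P (Z ⁻¹' s)).toReal with hc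
    -- conditional independence gives a product formula for the conditional expectation
    have hmul := (condIndepFun_iff_condExp_inter_preimage_eq_mul (μ := P)
      (hm' := hU.comap_le) hW hZ).mp hWZ a s ham hsm
    -- independence of `Z` and `U` makes the conditional expectation of `Z`-events constant
    have hconst : (P⟦Z ⁻¹' s | MeasurableSpace.comap U inferInstance⟧) =ᵐ[P] fun _ => c := by
      have hsm' : MeasurableSet[MeasurableSpace.comap Z inferInstance] (Z ⁻¹' s) :=
        ⟨s, hsm, rfl⟩
      have hsmeas : StronglyMeasurable[MeasurableSpace.comap Z inferInstance]
          ((Z ⁻¹' s).indicator (fun _ => (1 : ℝ))) :=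
        stronglyMeasurable_const.indicator hsm'
      have h := condExp_indep_eq (μ := P) hZ.comap_le hU.comap_le hsmeas
        (hUZ.symm : Indep (MeasurableSpace.comap Z inferInstance) (MeasurableSpace.comap U inferInstance) P)
      refine h.trans ?_
      filter_upwards with ω
      rw [integral_indicator_const (1 : ℝ) hZs, smul_eq_mul, mul_one, measureReal_def]
    -- combined a.e. identity
    have hae : (P⟦W ⁻¹' a ∩ Z ⁻¹' s | MeasurableSpace.comap U inferInstance⟧) =ᵐ[P]
        fun ω => (P⟦W ⁻¹' a | MeasurableSpace.comap U inferInstance⟧) ω * c := by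
      filter_upwards [hmul, hconst] with ω h1 h2
      rw [h1, h2]
    have hint : Integrable ((W ⁻¹' a ∩ Z ⁻¹' s).indicator (fun _ => (1 : ℝ))) P :=
      (integrable_const (1 : ℝ)).indicator hA
    have hintW : Integrable ((W ⁻¹' a).indicator (fun _ => (1 : ℝ))) P :=
      (integrable_const (1 : ℝ)).indicator hWa
    -- compute the measure of the triple intersection via conditional expectations
    have hreal : (P (Z ⁻¹' s ∩ (W ⁻¹' a ∩ U ⁻¹' b))).toReal
        = c * (P (W ⁻¹' a ∩ U ⁻¹' b)).toReal := by
      have hset : Z ⁻¹' s ∩ (W ⁻¹' a ∩ U ⁻¹' b) = (W ⁻¹' a ∩ Z ⁻¹' s) ∩ U ⁻¹' b := by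
        ext ω; simp; tauto
      have e1 : ∫ ω in U ⁻¹' b, ((W ⁻¹' a ∩ Z ⁻¹' s).indicator (fun _ => (1 : ℝ))) ω ∂P
          = (P ((W ⁻¹' a ∩ Z ⁻¹' s) ∩ U ⁻¹' b)).toReal := by
        rw [setIntegral_indicator hA, setIntegral_const, smul_eq_mul, mul_one, Set.inter_comm, measureReal_def]
      have e2 : ∫ ω in U ⁻¹' b, (P⟦W ⁻¹' a ∩ Z ⁻¹' s | MeasurableSpace.comap U inferInstance⟧) ω ∂P
          = ∫ ω in U ⁻¹' b, ((W ⁻¹' a ∩ Z ⁻¹' s).indicator (fun _ => (1 : ℝ))) ω ∂P :=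
        setIntegral_condExp hm' hint hUb'
      have e3 : ∫ ω in U ⁻¹' b, (P⟦W ⁻¹' a ∩ Z ⁻¹' s | MeasurableSpace.comap U inferInstance⟧) ω ∂P
          = ∫ ω in U ⁻¹' b, (P⟦W ⁻¹' a | MeasurableSpace.comap U inferInstance⟧) ω * c ∂P :=
        setIntegral_congr_ae hUb (hae.mono fun ω h _ => h)
      have e4 : ∫ ω in U ⁻¹' b, (P⟦W ⁻¹' a | MeasurableSpace.comap U inferInstance⟧) ω * c ∂P
          = (∫ ω in U ⁻¹' b, (P⟦W ⁻¹' a | MeasurableSpace.comap U inferInstance⟧) ω ∂P) * c := integral_mul_const c _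
      have e5 : ∫ ω in U ⁻¹' b, (P⟦W ⁻¹' a | MeasurableSpace.comap U inferInstance⟧) ω ∂P
          = (P (W ⁻¹' a ∩ U ⁻¹' b)).toReal := by
        rw [setIntegral_condExp hm' hintW hUb', setIntegral_indicator hWa, setIntegral_const,
          smul_eq_mul, mul_one, Set.inter_comm, measureReal_def]
      rw [hset, ← e1, ← e2, e3, e4, e5, mul_comm]
    have h1 : P (Z ⁻¹' s ∩ (W ⁻¹' a ∩ U ⁻¹' b)) ≠ ⊤ := measure_ne_top _ _
    have h2 : P (Z ⁻¹' s) * P (W ⁻¹' a ∩ U ⁻¹' b) ≠ ⊤ :=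
      ENNReal.mul_ne_top (measure_ne_top _ _) (measure_ne_top _ _)
    rw [← ENNReal.toReal_eq_toReal_iff' h1 h2, hreal, ENNReal.toReal_mul]
  -- build independence of `Z` and the pair `(W, U)` from the rectangle computation
  have hZWU : IndepFun Z (fun ω => (W ω, U ω)) P := by
    have hind : Indep (MeasurableSpace.comap Z inferInstance)
        (MeasurableSpace.comap (fun ω => (W ω, U ω)) inferInstance) P := by
      refine IndepSets.indep hZ.comap_le (Measurable.comap_le (hW.prodMk hU))
        (MeasurableSpace.isPiSystem_measurableSet.comap Z)
        (isPiSystem_prod.comap (fun ω => (W ω, U ω))) ?_ ?_ ?_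
      · have h1 : MeasurableSpace.comap Z (inferInstance : MeasurableSpace (Fin K))
            = MeasurableSpace.comap Z
              (MeasurableSpace.generateFrom {s : Set (Fin K) | MeasurableSet s}) := by
          rw [MeasurableSpace.generateFrom_measurableSet]
        exact h1.trans MeasurableSpace.comap_generateFrom
      · have h1 : MeasurableSpace.comap (fun ω => (W ω, U ω))
            (inferInstance : MeasurableSpace (Bool × Fin m))
            = MeasurableSpace.comap (fun ω => (W ω, U ω))
              (MeasurableSpace.generateFrom (Set.image2 (· ×ˢ ·)
                { s : Set Bool | MeasurableSet s } { t : Set (Fin m) | MeasurableSet t })) := by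
          rw [generateFrom_prod]
        exact h1.trans MeasurableSpace.comap_generateFrom
      · rw [IndepSets_iff]
        rintro t1 t2 ⟨s, _, rfl⟩ ⟨r, ⟨a, ha, b, hb, rfl⟩, rfl⟩
        rw [Set.mk_preimage_prod]
        exact key s a b
    exact hind
  refine ⟨?_, hZWU⟩
  have h := hZWU.comp (measurable_id (α := Fin K)) (measurable_fst (α := Bool) (β := Fin m))
  exact h
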